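/- Over the four-letter alphabet {a,b,c,d}, if rows must be Dyck words with matching pairs [a,b] and [c,d], and columns must be Dyck words with matching pairs [a,d] and [b,c], then the resulting crossword picture language is empty. -/
import Mathlib


/-- The four-letter alphabet {a, b, c, d}. -/
inductive Del : Type
  | a | b | c | d
deriving DecidableEq

/-- Row cancellation: pairs [a,b] and [c,d]. -/
def rowStep (w w' : List Del) : Prop :=
  ∃ (u v : List Del),
    (w = u ++ [Del.a, Del.b] ++ v ∨ w = u ++ [Del.c, Del.d] ++ v) ∧ w' = u ++ v

def DRow (w : List Del) : Prop := Relation.ReflTransGen rowStep w []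

/-- Column cancellation with the (bad) pairing [a,d] and [b,c]. -/
def colStepBad (w w' : List Del) : Prop :=
  ∃ (u v : List Del),
    (w = u ++ [Del.a, Del.d] ++ v ∨ w = u ++ [Del.b, Del.c] ++ v) ∧ w' = u ++ v

def DColBad (w : List Del) : Prop := Relation.ReflTransGen colStepBad w []

def row (p : ℕ → ℕ → Del) (n i : ℕ) : List Del := (List.range n).map (p i)

def col (p : ℕ → ℕ → Del) (m j : ℕ) : List Del :=
  (List.range m).map (fun i => p i j)

lemma last_eq {α : Type*} {u s : List α} {x y : α} (h : u ++ [x] = s ++ [y]) : x = y := by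
  have := congrArg List.getLast? h
  simpa using this

lemma rowLast {w : List Del} (h : DRow w) :
    ∀ u x, w = u ++ [x] → x = Del.b ∨ x = Del.d := by
  induction h using Relation.ReflTransGen.head_induction_on with
  | refl =>
    intro u x hx
    exact absurd hx.symm (by simp)
  | head hstep _ ih =>
    intro u x hx
    obtain ⟨u', v, hw, hw'⟩ := hstep
    rcases v.eq_nil_or_concat with rfl | ⟨v0, vl, rfl⟩
    · rcases hw with h1 | h1
      · left
        have : u ++ [x] = (u' ++ [Del.a]) ++ [Del.b] := by rw [← hx, h1]; simp
        exact last_eq this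
      · right
        have : u ++ [x] = (u' ++ [Del.c]) ++ [Del.d] := by rw [← hx, h1]; simp
        exact last_eq this
    · have hvl := ih (u' ++ v0) vl (by rw [hw']; simp)
      have hx' : x = vl := by
        rcases hw with h1 | h1
        · have : u ++ [x] = (u' ++ [Del.a, Del.b] ++ v0) ++ [vl] := by
            rw [← hx, h1]; simp
          exact last_eq this
        · have : u ++ [x] = (u' ++ [Del.c, Del.d] ++ v0) ++ [vl] := by
            rw [← hx, h1]; simp
          exact last_eq this
      exact hx' ▸ hvl

lemma colBad_nil {w : List Del} (h : DColBad w)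
    (hbd : ∀ x ∈ w, x = Del.b ∨ x = Del.d) : w = [] := by
  rcases Relation.ReflTransGen.cases_head h with h0 | ⟨w', hstep, _⟩
  · exact h0
  · obtain ⟨u, v, hw, _⟩ := hstep
    rcases hw with h1 | h1
    · have : Del.a ∈ w := by rw [h1]; simp
      rcases hbd _ this with h | h <;> simp at h
    · have : Del.c ∈ w := by rw [h1]; simp
      rcases hbd _ this with h | h <;> simp at h

/-- With row pairs [a,b],[c,d] and column pairs [a,d],[b,c] the crossword
picture language is empty. -/
theorem crossword_badPairing_empty (m n : ℕ) (hm : 1 ≤ m) (hn : 1 ≤ n)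
    (p : ℕ → ℕ → Del) :
    ¬ ((∀ i < m, DRow (row p n i)) ∧ (∀ j < n, DColBad (col p m j))) := by
  rintro ⟨hr, hc⟩
  have hj : n - 1 < n := Nat.sub_lt hn one_pos
  have hcol := hc (n - 1) hj
  have hbd : ∀ x ∈ col p m (n - 1), x = Del.b ∨ x = Del.d := by
    intro x hx
    simp only [col, List.mem_map, List.mem_range] at hx
    obtain ⟨i, him, rfl⟩ := hx
    have hrow := hr i him
    have hsplit : row p n i = (List.range (n - 1)).map (p i) ++ [p i (n - 1)] := by
      unfold row
      conv_lhs => rw [show n = (n - 1) + 1 from (Nat.succ_pred_eq_of_pos hn).symm]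
      rw [List.range_succ, List.map_append]
      simp
    exact rowLast hrow _ _ hsplit
  have hnil := colBad_nil hcol hbd
  have : (col p m (n - 1)).length = m := by simp [col]
  rw [hnil] at this
  simp at this
  omega
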